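/- arXiv:2404.06515 — 2 statements merged into one kernel-verified Lean document; each statement's English description precedes it below -/
import Mathlib

section
/- Let N_M be the MacLean reaction network on the 19 species A1–A9 and A12–A21 with the 31 reactions: 0→A4, A4→A5, A5→A4, A1+A4→A8, A8→A1+A4, A5+A3→A9, A9→A5+A3, A6+A5→A7, A7→A6+A5, A12→A13, A13→A12, A13→A14, A14→A13, A2→A15, A15→A2, A3+A14→A19, A19→A3+A14, A19→A14+A15, A15+A17→A21, A21→A15+A17, A21→A3+A17, A13+A1→A18, A18→A13+A1, A18→A13+A2, A2+A16→A20, A20→A2+A16, A20→A1+A16, A8→A1, A9→A3, A4→0, A5→0. Then the embedded network of N_M with respect to the species subset S = {A1, A2, A3, A4, A5, A6, A7, A8, A9} consists of exactly the following 19 reactions: 0→A4, A4→A5, A5→A4, A1+A4→A8, A8→A1+A4, A5+A3→A9, A9→A5+A3, A6+A5→A7, A7→A6+A5, A8→A1, A9→A3, A4→0, A5→0, A2→0, 0→A2, A3→0, 0→A3, A1→0, 0→A1. -/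
open scoped BigOperators

/-- A complex on `m` species: a vector of nonnegative integer stoichiometric coefficients. -/
abbrev Cx (m : ℕ) := Fin m → ℕ

/-- The complex consisting of one unit of species `j`. -/
def e {m : ℕ} (j : Fin m) : Cx m := Pi.single j 1

/-- Mass action rate function with rate constant `k` and reactant complex `y`. -/
noncomputable def massAction {m : ℕ} (k : ℝ) (y : Cx m) : (Fin m → ℝ) → ℝ :=
  fun x => k * ∏ i, x i ^ y i

/-- Species formation rate function of a kinetic system given as a list of
reactions `(reactant, product)` with assigned rate functions. -/
noncomputable def sfrf {m : ℕ}
    (R : List ((Cx m × Cx m) × ((Fin m → ℝ) → ℝ))) : (Fin m → ℝ) → (Fin m → ℝ) :=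
  fun x => (R.map (fun r => r.2 x • (fun i => ((r.1.2 i : ℝ) - (r.1.1 i : ℝ))))).sum

/-- Stoichiometric subspace: the linear span of the reaction vectors. -/
def stoich {m : ℕ} (R : List (Cx m × Cx m)) : Submodule ℝ (Fin m → ℝ) :=
  Submodule.span ℝ {v | ∃ r ∈ R, v = fun i => ((r.2 i : ℝ) - (r.1 i : ℝ))}

/-- Embedded network with respect to the species subset given by the injection `ι`:
restrict every reaction to the chosen coordinates, discarding trivial reactions;
duplicate restricted reactions are identified since the result is a set. -/
def embed {m k : ℕ} (ι : Fin k → Fin m) (R : List (Cx m × Cx m)) :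
    Set (Cx k × Cx k) :=
  {r | r.1 ≠ r.2 ∧ ∃ q ∈ R, r = (q.1 ∘ ι, q.2 ∘ ι)}

/- Species indexing: A1=0, …, A9=8, A12=9, A13=10, A14=11, A15=12, A16=13,
A17=14, A18=15, A19=16, A20=17, A21=18. -/

/-- The MacLean reaction network `N_M` on 19 species (31 reactions). -/
def NM : List (Cx 19 × Cx 19) :=
  [ (0, e 3),               -- 0 → A4
    (e 3, e 4),             -- A4 → A5
    (e 4, e 3),             -- A5 → A4
    (e 0 + e 3, e 7),       -- A1+A4 → A8
    (e 7, e 0 + e 3),       -- A8 → A1+A4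
    (e 4 + e 2, e 8),       -- A5+A3 → A9
    (e 8, e 4 + e 2),       -- A9 → A5+A3
    (e 5 + e 4, e 6),       -- A6+A5 → A7
    (e 6, e 5 + e 4),       -- A7 → A6+A5
    (e 9, e 10),            -- A12 → A13
    (e 10, e 9),            -- A13 → A12
    (e 10, e 11),           -- A13 → A14
    (e 11, e 10),           -- A14 → A13
    (e 1, e 12),            -- A2 → A15
    (e 12, e 1),            -- A15 → A2
    (e 2 + e 11, e 16),     -- A3+A14 → A19
    (e 16, e 2 + e 11),     -- A19 → A3+A14
    (e 16, e 11 + e 12),    -- A19 → A14+A15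
    (e 12 + e 14, e 18),    -- A15+A17 → A21
    (e 18, e 12 + e 14),    -- A21 → A15+A17
    (e 18, e 2 + e 14),     -- A21 → A3+A17
    (e 10 + e 0, e 15),     -- A13+A1 → A18
    (e 15, e 10 + e 0),     -- A18 → A13+A1
    (e 15, e 10 + e 1),     -- A18 → A13+A2
    (e 1 + e 13, e 17),     -- A2+A16 → A20
    (e 17, e 1 + e 13),     -- A20 → A2+A16
    (e 17, e 0 + e 13),     -- A20 → A1+A16
    (e 7, e 0),             -- A8 → A1
    (e 8, e 2),             -- A9 → A3
    (e 3, 0),               -- A4 → 0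
    (e 4, 0) ]              -- A5 → 0

/-- The 19 embedded reactions as a list. -/
def L19 : List (Cx 9 × Cx 9) :=
  [ ((0 : Cx 9), e 3), (e 3, e 4), (e 4, e 3), (e 0 + e 3, e 7), (e 7, e 0 + e 3),
    (e 4 + e 2, e 8), (e 8, e 4 + e 2), (e 5 + e 4, e 6), (e 6, e 5 + e 4),
    (e 7, e 0), (e 8, e 2), (e 3, (0 : Cx 9)), (e 4, (0 : Cx 9)),
    (e 1, (0 : Cx 9)), ((0 : Cx 9), e 1), (e 2, (0 : Cx 9)), ((0 : Cx 9), e 2),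
    (e 0, (0 : Cx 9)), ((0 : Cx 9), e 0) ]

lemma mem_L19_or (x : Cx 9 × Cx 9) (hx : x ∈ L19) :
    x = ((0 : Cx 9), e 3) ∨ x = (e 3, e 4) ∨ x = (e 4, e 3) ∨ x = (e 0 + e 3, e 7) ∨
    x = (e 7, e 0 + e 3) ∨ x = (e 4 + e 2, e 8) ∨ x = (e 8, e 4 + e 2) ∨
    x = (e 5 + e 4, e 6) ∨ x = (e 6, e 5 + e 4) ∨ x = (e 7, e 0) ∨ x = (e 8, e 2) ∨
    x = (e 3, (0 : Cx 9)) ∨ x = (e 4, (0 : Cx 9)) ∨ x = (e 1, (0 : Cx 9)) ∨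
    x = ((0 : Cx 9), e 1) ∨ x = (e 2, (0 : Cx 9)) ∨ x = ((0 : Cx 9), e 2) ∨
    x = (e 0, (0 : Cx 9)) ∨ x = ((0 : Cx 9), e 0) := by
  simpa [L19, List.mem_cons] using hx

/-- The embedded network of `N_M` with respect to the species subset
`{A1, …, A9}` (the first nine coordinates) consists of exactly 19 reactions. -/
theorem embed_NM :
    embed (Fin.castLE (by norm_num) : Fin 9 → Fin 19) NM =
    ({ ((0 : Cx 9), e 3),     -- 0 → A4
       (e 3, e 4),            -- A4 → A5
       (e 4, e 3),            -- A5 → A4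
       (e 0 + e 3, e 7),      -- A1+A4 → A8
       (e 7, e 0 + e 3),      -- A8 → A1+A4
       (e 4 + e 2, e 8),      -- A5+A3 → A9
       (e 8, e 4 + e 2),      -- A9 → A5+A3
       (e 5 + e 4, e 6),      -- A6+A5 → A7
       (e 6, e 5 + e 4),      -- A7 → A6+A5
       (e 7, e 0),            -- A8 → A1
       (e 8, e 2),            -- A9 → A3
       (e 3, (0 : Cx 9)),     -- A4 → 0
       (e 4, (0 : Cx 9)),     -- A5 → 0
       (e 1, (0 : Cx 9)),     -- A2 → 0
       ((0 : Cx 9), e 1),     -- 0 → A2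
       (e 2, (0 : Cx 9)),     -- A3 → 0
       ((0 : Cx 9), e 2),     -- 0 → A3
       (e 0, (0 : Cx 9)),     -- A1 → 0
       ((0 : Cx 9), e 0) } : Set (Cx 9 × Cx 9)) := by
  ext ⟨a, b⟩
  simp only [embed, Set.mem_setOf_eq, Set.mem_insert_iff, Set.mem_singleton_iff]
  constructor
  · rintro ⟨hne, q, hq, h⟩
    fin_cases hq <;> injection h with h1 h2 <;> subst h1 <;> subst h2 <;>
      first
        | exact (hne (by decide)).elim
        | exact mem_L19_or _ (by decide)
  · intro h
    rcases h with h|h|h|h|h|h|h|h|h|h|h|h|h|h|h|h|h|h|h <;>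
      injection h with h1 h2 <;> subst h1 <;> subst h2
    · exact ⟨by decide, (0, e 3), by decide, by decide⟩
    · exact ⟨by decide, (e 3, e 4), by decide, by decide⟩
    · exact ⟨by decide, (e 4, e 3), by decide, by decide⟩
    · exact ⟨by decide, (e 0 + e 3, e 7), by decide, by decide⟩
    · exact ⟨by decide, (e 7, e 0 + e 3), by decide, by decide⟩
    · exact ⟨by decide, (e 4 + e 2, e 8), by decide, by decide⟩
    · exact ⟨by decide, (e 8, e 4 + e 2), by decide, by decide⟩
    · exact ⟨by decide, (e 5 + e 4, e 6), by decide, by decide⟩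
    · exact ⟨by decide, (e 6, e 5 + e 4), by decide, by decide⟩
    · exact ⟨by decide, (e 7, e 0), by decide, by decide⟩
    · exact ⟨by decide, (e 8, e 2), by decide, by decide⟩
    · exact ⟨by decide, (e 3, 0), by decide, by decide⟩
    · exact ⟨by decide, (e 4, 0), by decide, by decide⟩
    · exact ⟨by decide, (e 1, e 12), by decide, by decide⟩
    · exact ⟨by decide, (e 12, e 1), by decide, by decide⟩
    · exact ⟨by decide, (e 2 + e 11, e 16), by decide, by decide⟩
    · exact ⟨by decide, (e 16, e 2 + e 11), by decide, by decide⟩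
    · exact ⟨by decide, (e 10 + e 0, e 15), by decide, by decide⟩
    · exact ⟨by decide, (e 17, e 0 + e 13), by decide, by decide⟩
end

section
/- Let N_F be the Feinberg reaction network (23 reactions on the 15 species A1, A2, A4, A6, A7, A8, A10, A12, A13, A23, …, A28: 0→A4, A1+A4→A8, A8→A1+A4, A10→0, A1→A2, A2→A1, A12→A13, A13→A12, A4→0, A24+A26→A23, A23→A24+A26, A8→A25, A25→A1+A10, 0→A26, A26→0, A4+A6→A7, A7→A4+A6, A24+A4→A27, A27→A24+A4, A13+A2→A28, A2→A23, A23→A2, A28→A13+A23) and let N_M be the MacLean reaction network (31 reactions on the 19 species A1–A9, A12–A21: 0→A4, A4→A5, A5→A4, A1+A4→A8, A8→A1+A4, A5+A3→A9, A9→A5+A3, A6+A5→A7, A7→A6+A5, A12→A13, A13→A12, A13→A14, A14→A13, A2→A15, A15→A2, A3+A14→A19, A19→A3+A14, A19→A14+A15, A15+A17→A21, A21→A15+A17, A21→A3+A17, A13+A1→A18, A18→A13+A1, A18→A13+A2, A2+A16→A20, A20→A2+A16, A20→A1+A16, A8→A1, A9→A3, A4→0, A5→0). Let S = {A1, A2,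 A4, A6, A7, A8, A12, A13} be their common species. Then the intersection of the embedded network of N_F with respect to S and the embedded network of N_M with respect to S consists of exactly the following 10 reactions: 0→A4, A1+A4→A8, A8→A1+A4, A12→A13, A13→A12, A4→0, 0→A1, A2→0, 0→A2, 0→A13. -/
open scoped BigOperators

/- Species indexing for the Feinberg network `N_F`: A1=0, A2=1, A4=2, A6=3, A7=4, A8=5,
A10=6, A12=7, A13=8, A23=9, A24=10, A25=11, A26=12, A27=13, A28=14.
Species indexing for the MacLean network `N_M`: A1=0, …, A9=8, A12=9, A13=10, A14=11,
A15=12, A16=13, A17=14, A18=15, A19=16, A20=17, A21=18.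
The common species S = {A1, A2, A4, A6, A7, A8, A12, A13} are indexed
A1=0, A2=1, A4=2, A6=3, A7=4, A8=5, A12=6, A13=7. -/

/-- The Feinberg reaction network `N_F` on 15 species (23 reactions). -/
def NF : List (Cx 15 × Cx 15) :=
  [ (0, e 2),               -- 0 → A4
    (e 0 + e 2, e 5),       -- A1+A4 → A8
    (e 5, e 0 + e 2),       -- A8 → A1+A4
    (e 6, 0),               -- A10 → 0
    (e 0, e 1),             -- A1 → A2
    (e 1, e 0),             -- A2 → A1
    (e 7, e 8),             -- A12 → A13
    (e 8, e 7),             -- A13 → A12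
    (e 2, 0),               -- A4 → 0
    (e 10 + e 12, e 9),     -- A24+A26 → A23
    (e 9, e 10 + e 12),     -- A23 → A24+A26
    (e 5, e 11),            -- A8 → A25
    (e 11, e 0 + e 6),      -- A25 → A1+A10
    (0, e 12),              -- 0 → A26
    (e 12, 0),              -- A26 → 0
    (e 2 + e 3, e 4),       -- A4+A6 → A7
    (e 4, e 2 + e 3),       -- A7 → A4+A6
    (e 10 + e 2, e 13),     -- A24+A4 → A27
    (e 13, e 10 + e 2),     -- A27 → A24+A4
    (e 8 + e 1, e 14),      -- A13+A2 → A28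
    (e 1, e 9),             -- A2 → A23
    (e 9, e 1),             -- A23 → A2
    (e 14, e 8 + e 9) ]     -- A28 → A13+A23

/-- Inclusion of the common species into the Feinberg species set. -/
def iotaF : Fin 8 → Fin 15 := ![0, 1, 2, 3, 4, 5, 7, 8]

/-- Inclusion of the common species into the MacLean species set. -/
def iotaM : Fin 8 → Fin 19 := ![0, 1, 3, 5, 6, 7, 9, 10]

/-- List version of the embedded network. -/
def embedL {m k : ℕ} (ι : Fin k → Fin m) (R : List (Cx m × Cx m)) :
    List (Cx k × Cx k) :=
  (R.map (fun q => (q.1 ∘ ι, q.2 ∘ ι))).filter (fun r => decide (r.1 ≠ r.2))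

lemma embed_eq_embedL {m k : ℕ} (ι : Fin k → Fin m) (R : List (Cx m × Cx m)) :
    embed ι R = {r | r ∈ embedL ι R} := by
  ext r
  simp only [embed, embedL, Set.mem_setOf_eq, List.mem_filter, List.mem_map,
    decide_not, Bool.not_eq_true', decide_eq_false_iff_not]
  constructor
  · rintro ⟨hne, q, hq, rfl⟩
    exact ⟨⟨q, hq, rfl⟩, hne⟩
  · rintro ⟨⟨q, hq, rfl⟩, hne⟩
    exact ⟨hne, q, hq, rfl⟩

set_option maxHeartbeats 2000000 in
/-- The intersection of the embedded networks of `N_F` and `N_M` with respect to their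
common species consists of exactly the following 10 reactions. -/
theorem embed_NF_inter_embed_NM :
    embed iotaF NF ∩ embed iotaM NM =
    ({ ((0 : Cx 8), e 2),    -- 0 → A4
       (e 0 + e 2, e 5),     -- A1+A4 → A8
       (e 5, e 0 + e 2),     -- A8 → A1+A4
       (e 6, e 7),           -- A12 → A13
       (e 7, e 6),           -- A13 → A12
       (e 2, (0 : Cx 8)),    -- A4 → 0
       ((0 : Cx 8), e 0),    -- 0 → A1
       (e 1, (0 : Cx 8)),    -- A2 → 0
       ((0 : Cx 8), e 1),    -- 0 → A2
       ((0 : Cx 8), e 7) } : Set (Cx 8 × Cx 8)) := by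
  rw [embed_eq_embedL, embed_eq_embedL]
  have h : embedL iotaF NF ∩ embedL iotaM NM =
      [((0 : Cx 8), e 2), (e 0 + e 2, e 5), (e 5, e 0 + e 2), (e 6, e 7), (e 7, e 6),
       (e 2, (0 : Cx 8)), ((0 : Cx 8), e 0), (e 2, (0 : Cx 8)), ((0 : Cx 8), e 2),
       (e 1, (0 : Cx 8)), ((0 : Cx 8), e 1), ((0 : Cx 8), e 7)] := by decide
  ext r
  simp only [Set.mem_inter_iff, Set.mem_setOf_eq, ← List.mem_inter_iff, h,
    List.mem_cons, List.not_mem_nil, or_false, Set.mem_insert_iff, Set.mem_singleton_iff]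
  tauto
end
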